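/- arXiv:2402.06205 — 6 statements merged into one kernel-verified Lean document; each statement's English description precedes it below -/
import Mathlib

section
/- A Latin square of order n contains at most n²(n−1)/4 intercalates. -/
def IsLatinSquare {n : ℕ} (L : Fin n → Fin n → Fin n) : Prop :=
  (∀ i, Function.Bijective (L i)) ∧ (∀ j, Function.Bijective fun i => L i j)

/-- A Latin square of order `n` has at most `n²(n-1)/4` intercalates. -/
theorem intercalate_bound {n : ℕ} (L : Fin n → Fin n → Fin n) (hL : IsLatinSquare L) :
    ((Finset.univ : Finset ((Fin n × Fin n) × Fin n × Fin n)).filter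
      (fun t => t.1.1 < t.1.2 ∧ t.2.1 < t.2.2 ∧
        L t.1.1 t.2.1 = L t.1.2 t.2.2 ∧ L t.1.1 t.2.2 = L t.1.2 t.2.1)).card * 4
      ≤ n ^ 2 * (n - 1) := by
  classical
  have hrow : ∀ i : Fin n, Function.Injective (L i) := fun i => (hL.1 i).1
  set T := ((Finset.univ : Finset ((Fin n × Fin n) × Fin n × Fin n)).filter
      (fun t => t.1.1 < t.1.2 ∧ t.2.1 < t.2.2 ∧
        L t.1.1 t.2.1 = L t.1.2 t.2.2 ∧ L t.1.1 t.2.2 = L t.1.2 t.2.1)) with hT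
  set O := ((Finset.univ : Finset ((Fin n × Fin n) × Fin n)).filter
      (fun p => p.1.1 ≠ p.1.2)) with hO
  set g : ((Fin n × Fin n) × Fin n × Fin n) × Fin 4 → (Fin n × Fin n) × Fin n :=
    fun p => if p.2 = 0 then ((p.1.1.1, p.1.1.2), p.1.2.1)
      else if p.2 = 1 then ((p.1.1.1, p.1.1.2), p.1.2.2)
      else if p.2 = 2 then ((p.1.1.2, p.1.1.1), p.1.2.1)
      else ((p.1.1.2, p.1.1.1), p.1.2.2) with hg
  have hmaps : ∀ p ∈ T ×ˢ (Finset.univ : Finset (Fin 4)), g p ∈ O := by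
    rintro ⟨⟨⟨a, b⟩, c, d⟩, k⟩ hp
    simp only [Finset.mem_product, hT, Finset.mem_filter, Finset.mem_univ, true_and, and_true] at hp
    obtain ⟨h1, h2, h3, h4⟩ := hp
    have hne : a ≠ b := ne_of_lt h1
    fin_cases k <;>
      simp only [hg, hO, Finset.mem_filter, Finset.mem_univ, true_and] <;>
      simp [hne, hne.symm]
  have hinj : Set.InjOn g ↑(T ×ˢ (Finset.univ : Finset (Fin 4))) := by
    rintro ⟨⟨⟨a, b⟩, c, d⟩, k⟩ hp ⟨⟨⟨a', b'⟩, c', d'⟩, k'⟩ hq heq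
    simp only [Finset.mem_coe, Finset.mem_product, hT, Finset.mem_filter,
      Finset.mem_univ, true_and, and_true] at hp hq
    obtain ⟨h1, h2, h3, h4⟩ := hp
    obtain ⟨h1', h2', h3', h4'⟩ := hq
    fin_cases k <;> fin_cases k' <;> simp only [hg] at heq ⊢ <;> simp at heq ⊢
    -- (0,0)
    · obtain ⟨⟨ha, hb⟩, hc⟩ := heq
      subst ha; subst hb; subst hc
      exact ⟨⟨rfl, rfl⟩, rfl, hrow a (h4.trans h4'.symm)⟩
    -- (0,1): c = d'
    · exfalso
      obtain ⟨⟨ha, hb⟩, hc⟩ := heq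
      subst ha; subst hb
      rw [← hc] at h3'
      have hcd : c' = d := hrow a (h3'.trans h4.symm)
      rw [hcd, ← hc] at h2'
      exact absurd (h2.trans h2') (lt_irrefl c)
    -- (0,2)
    · exact absurd (heq.1.1 ▸ heq.1.2 ▸ h1) (not_lt.mpr h1'.le)
    -- (0,3)
    · exact absurd (heq.1.1 ▸ heq.1.2 ▸ h1) (not_lt.mpr h1'.le)
    -- (1,0): d = c'
    · exfalso
      obtain ⟨⟨ha, hb⟩, hc⟩ := heq
      subst ha; subst hb
      rw [← hc] at h4'
      have hcd : d' = c := hrow a (h4'.trans h3.symm)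
      rw [hcd, ← hc] at h2'
      exact absurd (h2.trans h2') (lt_irrefl c)
    -- (1,1)
    · obtain ⟨⟨ha, hb⟩, hc⟩ := heq
      subst ha; subst hb; subst hc
      exact ⟨⟨rfl, rfl⟩, hrow a (h3.trans h3'.symm), rfl⟩
    -- (1,2)
    · exact absurd (heq.1.1 ▸ heq.1.2 ▸ h1) (not_lt.mpr h1'.le)
    -- (1,3)
    · exact absurd (heq.1.1 ▸ heq.1.2 ▸ h1) (not_lt.mpr h1'.le)
    -- (2,0)
    · exact absurd (heq.1.2 ▸ heq.1.1 ▸ h1') (not_lt.mpr h1.le)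
    -- (2,1)
    · exact absurd (heq.1.2 ▸ heq.1.1 ▸ h1') (not_lt.mpr h1.le)
    -- (2,2)
    · obtain ⟨⟨hb, ha⟩, hc⟩ := heq
      subst ha; subst hb; subst hc
      exact ⟨⟨rfl, rfl⟩, rfl, hrow b (h3.symm.trans h3')⟩
    -- (2,3): c = d'
    · exfalso
      obtain ⟨⟨hb, ha⟩, hc⟩ := heq
      subst ha; subst hb
      rw [← hc] at h3'
      have hcd : c' = d := hrow a (h3'.trans h4.symm)
      rw [hcd, ← hc] at h2'
      exact absurd (h2.trans h2') (lt_irrefl c)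
    -- (3,0)
    · exact absurd (heq.1.2 ▸ heq.1.1 ▸ h1') (not_lt.mpr h1.le)
    -- (3,1)
    · exact absurd (heq.1.2 ▸ heq.1.1 ▸ h1') (not_lt.mpr h1.le)
    -- (3,2): d = c'
    · exfalso
      obtain ⟨⟨hb, ha⟩, hc⟩ := heq
      subst ha; subst hb
      rw [← hc] at h4'
      have hcd : d' = c := hrow a (h4'.trans h3.symm)
      rw [hcd, ← hc] at h2'
      exact absurd (h2.trans h2') (lt_irrefl c)
    -- (3,3)
    · obtain ⟨⟨hb, ha⟩, hc⟩ := heq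
      subst ha; subst hb; subst hc
      exact ⟨⟨rfl, rfl⟩, hrow b (h4.symm.trans h4'), rfl⟩
  have hle : (T ×ˢ (Finset.univ : Finset (Fin 4))).card ≤ O.card :=
    Finset.card_le_card_of_injOn g hmaps hinj
  have hOcard : O.card = (n * n - n) * n := by
    have hOe : O = (Finset.univ : Finset (Fin n)).offDiag ×ˢ (Finset.univ : Finset (Fin n)) := by
      ext ⟨⟨a, b⟩, c⟩
      simp [hO, Finset.mem_offDiag]
    rw [hOe, Finset.card_product, Finset.offDiag_card]
    simp
  rw [Finset.card_product, Finset.card_univ, Fintype.card_fin, hOcard] at hle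
  calc T.card * 4 ≤ (n * n - n) * n := hle
    _ = n ^ 2 * (n - 1) := by
      rw [sq, Nat.sub_mul, Nat.mul_sub, mul_one, mul_assoc]
end

section
/- If M is a proper subsquare of a Latin subsquare N of a Latin square L (that is, M is a subsquare of N with M ≠ N), then the order of N is at least twice the order of M. -/
/-- A Latin subsquare of `L`, given by row set `R`, column set `C` and symbol set `S`. -/
def IsSubsquare {n : ℕ} (L : Fin n → Fin n → Fin n) (R C S : Finset (Fin n)) : Prop :=
  R.card = C.card ∧ C.card = S.card ∧ ∀ r ∈ R, ∀ c ∈ C, L r c ∈ S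

/-- A proper subsquare of a subsquare `N` has order at most half the order of `N`. -/
theorem proper_subsquare_half {n : ℕ} (L : Fin n → Fin n → Fin n) (hL : IsLatinSquare L)
    (R₁ C₁ S₁ R₂ C₂ S₂ : Finset (Fin n))
    (h₁ : IsSubsquare L R₁ C₁ S₁) (h₂ : IsSubsquare L R₂ C₂ S₂)
    (hR : R₁ ⊆ R₂) (hC : C₁ ⊆ C₂) (hS : S₁ ⊆ S₂)
    (hne : (R₁, C₁, S₁) ≠ (R₂, C₂, S₂)) (hpos : 0 < R₁.card) :
    2 * R₁.card ≤ R₂.card := by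
  obtain ⟨hRC₁, hCS₁, hmem₁⟩ := h₁
  obtain ⟨hRC₂, hCS₂, hmem₂⟩ := h₂
  -- R₁.card < R₂.card
  have hlt : R₁.card < R₂.card := by
    rcases lt_or_eq_of_le (Finset.card_le_card hR) with h | h
    · exact h
    · exfalso
      have hReq : R₁ = R₂ := Finset.eq_of_subset_of_card_le hR h.ge
      have hCeq : C₁ = C₂ := Finset.eq_of_subset_of_card_le hC (by omega)
      have hSeq : S₁ = S₂ := Finset.eq_of_subset_of_card_le hS (by omega)
      exact hne (by rw [hReq, hCeq, hSeq])
  obtain ⟨r, hrR₂, hrR₁⟩ := Finset.exists_of_ssubset (Finset.ssubset_iff_subset_ne.2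
    ⟨hR, fun h => absurd (h ▸ rfl : R₁.card = R₂.card) hlt.ne⟩)
  -- image of column c over R₁ is exactly S₁
  have hcol : ∀ c ∈ C₁, R₁.image (fun r' => L r' c) = S₁ := by
    intro c hc
    apply Finset.eq_of_subset_of_card_le
    · intro s hs
      obtain ⟨r', hr', rfl⟩ := Finset.mem_image.1 hs
      exact hmem₁ r' hr' c hc
    · rw [Finset.card_image_of_injective _ (fun a b hab => (hL.2 c).1 hab)]
      omega
  -- L r maps C₁ into S₂ \ S₁
  have hsub : C₁.image (L r) ⊆ S₂ \ S₁ := by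
    intro s hs
    obtain ⟨c, hc, rfl⟩ := Finset.mem_image.1 hs
    refine Finset.mem_sdiff.2 ⟨hmem₂ r hrR₂ c (hC hc), fun hs₁ => ?_⟩
    rw [← hcol c hc] at hs₁
    obtain ⟨r', hr', heq⟩ := Finset.mem_image.1 hs₁
    exact hrR₁ (((hL.2 c).1 heq) ▸ hr')
  have hcard : C₁.card ≤ S₂.card - S₁.card := by
    have := Finset.card_le_card hsub
    rwa [Finset.card_image_of_injective _ (hL.1 r).1, Finset.card_sdiff_of_subset hS] at this
  have hS₁S₂ : S₁.card ≤ S₂.card := Finset.card_le_card hS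
  omega
end

section
/- In the Cayley table of a Steiner quasigroup (V,∘), for any two distinct rows r and r', if a row cycle R between rows r and r' has column set C and symbol set S with C, S ⊆ V \ {r, r'}, then C and S are disjoint. -/
/-- In the Cayley table of a Steiner quasigroup, the column set and symbol set of a
row cycle between rows `r ≠ r'` avoiding `r, r'` are disjoint. -/
theorem rowcycle_columns_symbols_disjoint {V : Type*} (op : V → V → V)
    (hidem : ∀ x, op x x = x) (hcomm : ∀ x y, op x y = op y x)
    (hsemi : ∀ x y, op (op x y) x = y)
    {k : ℕ} [NeZero k] (r r' : V) (hrr' : r ≠ r')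
    (c s : ZMod k → V) (hc : Function.Injective c) (hs : Function.Injective s)
    (hcyc : ∀ i, op r (c i) = s i ∧ op r' (c i) = s (i + 1))
    (hC : ∀ i, c i ≠ r ∧ c i ≠ r') (hS : ∀ i, s i ≠ r ∧ s i ≠ r') :
    ∀ i j, c i ≠ s j := by
  have hop : ∀ x y, op x (op x y) = y := fun x y => by
    rw [hcomm]; exact hsemi x y
  have hfix : ∀ x y, op x y = y → y = x := by
    intro x y h
    have h1 := hsemi y x
    rw [hcomm y x, h, hidem] at h1
    exact h1
  intro i j hcs
  have stepR : ∀ a b : ZMod k, c a = s b → c b = s a := by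
    intro a b h
    have h1 : s a = op r (c a) := ((hcyc a).1).symm
    have h2 : op r (s b) = c b := by rw [← (hcyc b).1, hop]
    rw [h, h2] at h1; exact h1.symm
  have stepR' : ∀ a b : ZMod k, c a = s b → c (b - 1) = s (a + 1) := by
    intro a b h
    have h1 : s (a + 1) = op r' (c a) := ((hcyc a).2).symm
    have h2 : op r' (s b) = c (b - 1) := by
      have h3 := (hcyc (b - 1)).2
      rw [sub_add_cancel] at h3
      rw [← h3, hop]
    rw [h, h2] at h1; exact h1.symm
  have step : ∀ a b : ZMod k, c a = s b → c (a - 1) = s (b + 1) := fun a b h =>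
    stepR' b a (stepR a b h)
  have key : ∀ n : ℕ, c (i - n) = s (j + n) := by
    intro n
    induction n with
    | zero => simpa using hcs
    | succ m ih =>
      have h := step _ _ ih
      convert h using 2 <;> push_cast <;> ring
  have keyZ : ∀ m : ZMod k, c m = s (i + j - m) := by
    intro m
    have hn : (((i - m).val : ℕ) : ZMod k) = i - m := ZMod.natCast_rightInverse (i - m)
    have h := key (i - m).val
    rw [hn] at h
    have e1 : i - (i - m) = m := by ring
    have e2 : j + (i - m) = i + j - m := by ring
    rwa [e1, e2] at h
  set t : ZMod k := i + j with ht
  rcases Nat.even_or_odd t.val with ⟨q, hq⟩ | ⟨q, hq⟩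
  · -- t = 2q, fixed point m = q for row r
    set m : ZMod k := ((q : ℕ) : ZMod k) with hm
    have h2m : m + m = t := by
      have : ((t.val : ℕ) : ZMod k) = t := ZMod.natCast_rightInverse t
      rw [← this, hq]; push_cast; ring
    have hsm : c m = s m := by
      have := keyZ m
      rw [← h2m] at this
      simpa using this
    have : op r (c m) = c m := by rw [(hcyc m).1, hsm]
    exact (hC m).1 (hfix r (c m) this)
  · -- t = 2q+1, fixed point m = q for row r'
    set m : ZMod k := ((q : ℕ) : ZMod k) with hm
    have h2m : m + m + 1 = t := by
      have : ((t.val : ℕ) : ZMod k) = t := ZMod.natCast_rightInverse t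
      rw [← this, hq]; push_cast; ring
    have hsm : c m = s (m + 1) := by
      have := keyZ m
      rw [← h2m] at this
      have e : m + m + 1 - m = m + 1 := by ring
      rwa [e] at this
    have : op r' (c m) = c m := by rw [(hcyc m).2, hsm]
    exact (hC m).2 (hfix r' (c m) this)
end

section
/- In the Cayley table of a Steiner quasigroup (V,∘), for any row cycle R between distinct rows r and r' with column set C ⊆ V \ {r,r'} and symbol set S ⊆ V \ {r,r'}, there exists a distinct row cycle R' between rows r and r' whose column set is S and whose symbol set is C. -/
/-- For every row cycle of a Steiner quasigroup between rows `r ≠ r'` with column set `C`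
and symbol set `S` avoiding `r, r'`, there is a distinct row cycle between the same rows
whose column set is `S` and whose symbol set is `C`. -/
theorem inverse_rowcycle {V : Type*} (op : V → V → V)
    (hidem : ∀ x, op x x = x) (hcomm : ∀ x y, op x y = op y x)
    (hsemi : ∀ x y, op (op x y) x = y)
    {k : ℕ} [NeZero k] (r r' : V) (hrr' : r ≠ r')
    (c s : ZMod k → V) (hc : Function.Injective c) (hs : Function.Injective s)
    (hcyc : ∀ i, op r (c i) = s i ∧ op r' (c i) = s (i + 1))
    (hC : ∀ i, c i ≠ r ∧ c i ≠ r') (hS : ∀ i, s i ≠ r ∧ s i ≠ r') :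
    ∃ c' s' : ZMod k → V, Function.Injective c' ∧ Function.Injective s' ∧
      (∀ i, op r (c' i) = s' i ∧ op r' (c' i) = s' (i + 1)) ∧
      Set.range c' = Set.range s ∧ Set.range s' = Set.range c ∧
      Set.range c' ≠ Set.range c := by
  classical
  have hinv : ∀ a b, op a (op a b) = b := fun a b => by
    rw [hcomm]; exact hsemi a b
  have hfix : ∀ a b, op a b = b → b = a := fun a b h => by
    have h1 : op b a = b := by rw [hcomm]; exact h
    have h2 := hsemi b a
    rw [h1, hidem] at h2
    exact h2
  have hrs : ∀ i, op r (s i) = c i := fun i => by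
    have h1 := hinv r (c i); rw [(hcyc i).1] at h1; exact h1
  have hr's : ∀ i, op r' (s (i + 1)) = c i := fun i => by
    have h1 := hinv r' (c i); rw [(hcyc i).2] at h1; exact h1
  have hrange : Set.range (fun i : ZMod k => s (-i)) = Set.range s := by
    ext x; constructor
    · rintro ⟨i, rfl⟩; exact ⟨-i, rfl⟩
    · rintro ⟨i, rfl⟩; exact ⟨-i, by simp⟩
  have hrange' : Set.range (fun i : ZMod k => c (-i)) = Set.range c := by
    ext x; constructor
    · rintro ⟨i, rfl⟩; exact ⟨-i, rfl⟩
    · rintro ⟨i, rfl⟩; exact ⟨-i, by simp⟩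
  refine ⟨fun i => s (-i), fun i => c (-i), ?_, ?_, ?_, hrange, hrange', ?_⟩
  · intro i j hij
    have := hs hij
    simpa [neg_inj] using this
  · intro i j hij
    have := hc hij
    simpa [neg_inj] using this
  · intro i
    refine ⟨hrs (-i), ?_⟩
    have h1 := hr's (-(i + 1))
    have e : -(i + 1) + 1 = -i := by ring
    rw [e] at h1
    exact h1
  · rw [hrange]
    intro h
    have hmem : ∀ i, s i ∈ Set.range c := fun i => h ▸ Set.mem_range_self i
    choose f hf using hmem
    have hff : ∀ i, f (f i) = i := fun i => by
      apply hc
      rw [hf, ← (hcyc (f i)).1, hf]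
      exact hrs i
    have hg : ∀ i, f (f (i + 1) + 1) = i := fun i => by
      apply hc
      rw [hf, ← (hcyc (f (i + 1))).2, hf]
      exact hr's i
    have hstep : ∀ m, f (m + 1) = f m - 1 := fun m => by
      have h1 := hg (f m - 1)
      have e : (f m - 1) + 1 = f m := by ring
      rw [e, hff] at h1
      exact h1
    have hlin : ∀ n : ℕ, f (n : ZMod k) = f 0 - n := by
      intro n
      induction n with
      | zero => simp
      | succ n ih =>
        push_cast
        rw [hstep, ih]
        ring
    have hall : ∀ i : ZMod k, f i = f 0 - i := fun i => by
      obtain ⟨n, rfl⟩ := ZMod.natCast_zmod_surjective i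
      exact hlin n
    obtain ⟨n, hn⟩ := ZMod.natCast_zmod_surjective (f 0)
    rcases Nat.even_or_odd n with ⟨m, hm⟩ | ⟨m, hm⟩
    · have key : f (m : ZMod k) = (m : ZMod k) := by
        rw [hall, ← hn, hm]; push_cast; ring
      have hbad : op r (c (m : ZMod k)) = c (m : ZMod k) := by
        rw [(hcyc _).1, ← hf, key]
      exact (hC _).1 (hfix _ _ hbad)
    · have key : f ((m : ZMod k) + 1) = (m : ZMod k) := by
        rw [hall, ← hn, hm]; push_cast; ring
      have hbad : op r' (c (m : ZMod k)) = c (m : ZMod k) := by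
        rw [(hcyc _).2, ← hf, key]
      exact (hC _).2 (hfix _ _ hbad)
end

section
/- A non-singular row cycle of length k between two rows of the Cayley table of a Steiner quasigroup yields 2k pairwise distinct blocks of the corresponding Steiner triple system, and these blocks together cover exactly 2k+2 points (the two rows, the k columns, and the k symbols); i.e., the cycle forms a (2k+2, 2k)-configuration. -/
/-- A non-singular row cycle of length `k` in a Steiner quasigroup yields `2k` distinct
blocks of the corresponding Steiner triple system covering exactly `2k + 2` points:
a `(2k+2, 2k)`-configuration. -/
theorem rowcycle_configuration {V : Type*} [DecidableEq V] {k : ℕ} [NeZero k]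
    (B : Finset (Finset V)) (hcard : ∀ b ∈ B, b.card = 3)
    (hpair : ∀ x y : V, x ≠ y → ∃! b, b ∈ B ∧ x ∈ b ∧ y ∈ b)
    (op : V → V → V) (hidem : ∀ x, op x x = x)
    (hblock : ∀ x y, x ≠ y → ({x, y, op x y} : Finset V) ∈ B)
    (r r' : V) (hrr' : r ≠ r')
    (c s : ZMod k → V) (hc : Function.Injective c) (hs : Function.Injective s)
    (hcyc : ∀ i, op r (c i) = s i ∧ op r' (c i) = s (i + 1))
    (hC : ∀ i, c i ≠ r ∧ c i ≠ r') (hS : ∀ i, s i ≠ r ∧ s i ≠ r')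
    (hdisj : ∀ i j, c i ≠ s j) :
    (∀ b ∈ (Finset.univ.image fun i : ZMod k => ({r, c i, s i} : Finset V)) ∪
        (Finset.univ.image fun i : ZMod k => ({r', c i, s (i + 1)} : Finset V)), b ∈ B) ∧
    ((Finset.univ.image fun i : ZMod k => ({r, c i, s i} : Finset V)) ∪
        (Finset.univ.image fun i : ZMod k => ({r', c i, s (i + 1)} : Finset V))).card
      = 2 * k ∧
    (((Finset.univ.image fun i : ZMod k => ({r, c i, s i} : Finset V)) ∪
        (Finset.univ.image fun i : ZMod k =>
          ({r', c i, s (i + 1)} : Finset V))).biUnion id)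
      = ({r, r'} : Finset V) ∪ Finset.univ.image c ∪ Finset.univ.image s ∧
    (((Finset.univ.image fun i : ZMod k => ({r, c i, s i} : Finset V)) ∪
        (Finset.univ.image fun i : ZMod k =>
          ({r', c i, s (i + 1)} : Finset V))).biUnion id).card = 2 * k + 2 := by
  classical
  have hkcard : Fintype.card (ZMod k) = k := ZMod.card k
  -- membership in B
  have hmem : ∀ b ∈ (Finset.univ.image fun i : ZMod k => ({r, c i, s i} : Finset V)) ∪
      (Finset.univ.image fun i : ZMod k => ({r', c i, s (i + 1)} : Finset V)), b ∈ B := by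
    intro b hb
    rcases Finset.mem_union.mp hb with h | h
    · obtain ⟨i, _, rfl⟩ := Finset.mem_image.mp h
      have h1 := hblock r (c i) (Ne.symm (hC i).1)
      rwa [(hcyc i).1] at h1
    · obtain ⟨i, _, rfl⟩ := Finset.mem_image.mp h
      have h1 := hblock r' (c i) (Ne.symm (hC i).2)
      rwa [(hcyc i).2] at h1
  refine ⟨hmem, ?_, ?_, ?_⟩
  · -- card = 2k
    have hinj1 : Function.Injective (fun i : ZMod k => ({r, c i, s i} : Finset V)) := by
      intro i j hij
      simp only [Finset.ext_iff] at hij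
      have := (hij (c i)).mp (by simp)
      simp only [Finset.mem_insert, Finset.mem_singleton] at this
      rcases this with h | h | h
      · exact absurd h (hC i).1
      · exact hc h
      · exact absurd h (hdisj i j)
    have hinj2 : Function.Injective (fun i : ZMod k => ({r', c i, s (i + 1)} : Finset V)) := by
      intro i j hij
      simp only [Finset.ext_iff] at hij
      have := (hij (c i)).mp (by simp)
      simp only [Finset.mem_insert, Finset.mem_singleton] at this
      rcases this with h | h | h
      · exact absurd h (hC i).2
      · exact hc h
      · exact absurd h (hdisj i (j + 1))
    have hdisjAB : Disjoint (Finset.univ.image fun i : ZMod k => ({r, c i, s i} : Finset V))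
        (Finset.univ.image fun i : ZMod k => ({r', c i, s (i + 1)} : Finset V)) := by
      rw [Finset.disjoint_left]
      intro b hb hb'
      obtain ⟨i, _, rfl⟩ := Finset.mem_image.mp hb
      obtain ⟨j, _, hj⟩ := Finset.mem_image.mp hb'
      have : r ∈ ({r', c j, s (j + 1)} : Finset V) := by rw [hj]; simp
      simp only [Finset.mem_insert, Finset.mem_singleton] at this
      rcases this with h | h | h
      · exact hrr' h
      · exact (hC j).1 h.symm
      · exact (hS (j+1)).1 h.symm
    rw [Finset.card_union_of_disjoint hdisjAB,
      Finset.card_image_of_injective _ hinj1, Finset.card_image_of_injective _ hinj2,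
      Finset.card_univ, hkcard]
    ring
  · -- biUnion
    ext x
    simp only [Finset.mem_biUnion, Finset.mem_union, Finset.mem_image, Finset.mem_insert,
      Finset.mem_singleton, Finset.mem_univ, true_and, id]
    constructor
    · rintro ⟨b, (⟨i, rfl⟩ | ⟨i, rfl⟩), hx⟩ <;>
        simp only [Finset.mem_insert, Finset.mem_singleton] at hx
      · rcases hx with rfl | rfl | rfl
        · exact Or.inl (Or.inl (Or.inl rfl))
        · exact Or.inl (Or.inr ⟨i, rfl⟩)
        · exact Or.inr ⟨i, rfl⟩
      · rcases hx with rfl | rfl | rfl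
        · exact Or.inl (Or.inl (Or.inr rfl))
        · exact Or.inl (Or.inr ⟨i, rfl⟩)
        · exact Or.inr ⟨i + 1, rfl⟩
    · rintro (((rfl | rfl) | ⟨i, rfl⟩) | ⟨i, rfl⟩)
      · exact ⟨_, Or.inl ⟨0, rfl⟩, by simp⟩
      · exact ⟨_, Or.inr ⟨0, rfl⟩, by simp⟩
      · exact ⟨_, Or.inl ⟨i, rfl⟩, by simp⟩
      · exact ⟨_, Or.inl ⟨i, rfl⟩, by simp⟩
  · -- card of points
    have hbieq :
        (((Finset.univ.image fun i : ZMod k => ({r, c i, s i} : Finset V)) ∪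
          (Finset.univ.image fun i : ZMod k =>
            ({r', c i, s (i + 1)} : Finset V))).biUnion id)
        = ({r, r'} : Finset V) ∪ Finset.univ.image c ∪ Finset.univ.image s := by
      ext x
      simp only [Finset.mem_biUnion, Finset.mem_union, Finset.mem_image, Finset.mem_insert,
        Finset.mem_singleton, Finset.mem_univ, true_and, id]
      constructor
      · rintro ⟨b, (⟨i, rfl⟩ | ⟨i, rfl⟩), hx⟩ <;>
          simp only [Finset.mem_insert, Finset.mem_singleton] at hx
        · rcases hx with rfl | rfl | rfl
          · exact Or.inl (Or.inl (Or.inl rfl))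
          · exact Or.inl (Or.inr ⟨i, rfl⟩)
          · exact Or.inr ⟨i, rfl⟩
        · rcases hx with rfl | rfl | rfl
          · exact Or.inl (Or.inl (Or.inr rfl))
          · exact Or.inl (Or.inr ⟨i, rfl⟩)
          · exact Or.inr ⟨i + 1, rfl⟩
      · rintro (((rfl | rfl) | ⟨i, rfl⟩) | ⟨i, rfl⟩)
        · exact ⟨_, Or.inl ⟨0, rfl⟩, by simp⟩
        · exact ⟨_, Or.inr ⟨0, rfl⟩, by simp⟩
        · exact ⟨_, Or.inl ⟨i, rfl⟩, by simp⟩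
        · exact ⟨_, Or.inl ⟨i, rfl⟩, by simp⟩
    rw [hbieq]
    have d1 : Disjoint (Finset.univ.image c) (Finset.univ.image s) := by
      rw [Finset.disjoint_left]
      rintro x hx hx'
      obtain ⟨i, _, rfl⟩ := Finset.mem_image.mp hx
      obtain ⟨j, _, hj⟩ := Finset.mem_image.mp hx'
      exact hdisj i j hj.symm
    have d2 : Disjoint ({r, r'} : Finset V) (Finset.univ.image c ∪ Finset.univ.image s) := by
      rw [Finset.disjoint_left]
      rintro x hx hx'
      simp only [Finset.mem_insert, Finset.mem_singleton] at hx
      rcases Finset.mem_union.mp hx' with h | h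
      · obtain ⟨i, _, rfl⟩ := Finset.mem_image.mp h
        rcases hx with rfl | rfl
        · exact (hC i).1 rfl
        · exact (hC i).2 rfl
      · obtain ⟨i, _, rfl⟩ := Finset.mem_image.mp h
        rcases hx with rfl | rfl
        · exact (hS i).1 rfl
        · exact (hS i).2 rfl
    rw [Finset.union_assoc, Finset.card_union_of_disjoint d2,
      Finset.card_union_of_disjoint d1,
      Finset.card_image_of_injective _ hc, Finset.card_image_of_injective _ hs,
      Finset.card_univ, hkcard, Finset.card_insert_of_notMem (by simpa using hrr'),
      Finset.card_singleton]
    ring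
end

section
/- If two idempotent symmetric Latin squares are isotopic via an isotopism of the form (α, α, γ) (same permutation on rows and columns), then they are equal after applying γ to all three coordinates; in particular, rrs-isotopic idempotent symmetric Latin squares are isomorphic. -/
/-- If two idempotent symmetric Latin squares are isotopic via an rrs-isotopism
`(α, α, γ)`, then `γ` is an isomorphism between them. -/
theorem rrs_isotopic_implies_isomorphic {n : ℕ} (L₁ L₂ : Fin n → Fin n → Fin n)
    (h₁ : IsLatinSquare L₁) (h₂ : IsLatinSquare L₂)
    (hsym₁ : ∀ x y, L₁ x y = L₁ y x) (hsym₂ : ∀ x y, L₂ x y = L₂ y x)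
    (hid₁ : ∀ x, L₁ x x = x) (hid₂ : ∀ x, L₂ x x = x)
    (α γ : Equiv.Perm (Fin n)) (hiso : ∀ x y, L₂ (α x) (α y) = γ (L₁ x y)) :
    ∀ x y, L₂ (γ x) (γ y) = γ (L₁ x y) := by
  have key : ∀ x, α x = γ x := by
    intro x
    have := hiso x x
    rwa [hid₂, hid₁] at this
  intro x y
  rw [← key, ← key, hiso]
end
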